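/- arXiv:1505.06293 — 5 statements merged into one kernel-verified Lean document; each statement's English description precedes it below -/
import Mathlib

section
/- Let 𝔛 and 𝔜 be classes of groups, let X ∈ 𝔛 and Y ∈ 𝔜, and let Y* be a subgroup of Y. Then the wreath product X Wr Y* satisfies every law of the class 𝔛 Wr 𝔜 = {X' Wr Y' : X' ∈ 𝔛, Y' ∈ 𝔜}; that is, X Wr Y* ∈ var(𝔛 Wr 𝔜). -/
/-! Laws pass to subgroups, so it suffices to embed `X Wr Y*` into `X Wr Y`. Choose a left
transversal `S` of `Y*` in `Y` and write every `y ∈ Y` uniquely as `y = s * σ y` with `s ∈ S`,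
`σ y ∈ Y*`. Then `σ (y * h) = σ y * h` for `h ∈ Y*`, so pulling base functions back along the
surjection `σ` intertwines the two translation actions and yields an injective homomorphism
`X Wr Y* →* X Wr Y`. -/

/-- The shift automorphism of the base group `B → A` given by `b : B`:
it sends `f` to `fun x => f (x * b)`. -/
def wreathShift {A B : Type*} [Group A] [Group B] (b : B) : (B → A) ≃* (B → A) where
  toFun f := fun x => f (x * b)
  invFun f := fun x => f (x * b⁻¹)
  left_inv f := by funext x; simp [mul_assoc]
  right_inv f := by funext x; simp [mul_assoc]
  map_mul' f g := rfl

/-- The action of `B` on the base group `B → A` by translation of arguments: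
`(b • f) x = f (x * b)`. -/
def wreathAction (A B : Type*) [Group A] [Group B] : B →* MulAut (B → A) where
  toFun := wreathShift
  map_one' := by ext f x; simp [wreathShift]
  map_mul' b₁ b₂ := by ext f x; simp [wreathShift, mul_assoc]

/-- The Cartesian (complete) wreath product `A Wr B = (B → A) ⋊ B`. -/
abbrev Wr (A B : Type*) [Group A] [Group B] : Type _ :=
  (B → A) ⋊[wreathAction A B] B

/-- `w` is a law of the group `G`: every homomorphic substitution from the free
group of countable rank into `G` sends `w` to `1`. -/
def IsLaw (G : Type*) [Group G] (w : FreeGroup ℕ) : Prop :=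
  ∀ φ : FreeGroup ℕ →* G, φ w = 1

universe u u'

theorem IsLaw.of_injective {G H : Type*} [Group G] [Group H] {w : FreeGroup ℕ} (f : G →* H)
    (hf : Function.Injective f) (hw : IsLaw H w) : IsLaw G w := fun φ =>
  hf (by rw [map_one, ← MonoidHom.comp_apply, hw])

namespace Wr

section Precomp

variable {A B B' : Type*} [Group A]

def precompHom (σ : B → B') : (B' → A) →* (B → A) where
  toFun f := f ∘ σ
  map_one' := rfl
  map_mul' _ _ := rfl

theorem precompHom_injective {σ : B → B'} (hσ : Function.Surjective σ) :
    Function.Injective (precompHom (A := A) σ) := fun _ _ h =>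
  hσ.injective_comp_right h

end Precomp

variable {A B B' : Type*} [Group A] [Group B] [Group B']

def mapOfEquivariant (ψ : B' →* B) (σ : B → B') (hσ : ∀ x b, σ (x * ψ b) = σ x * b) :
    Wr A B' →* Wr A B :=
  SemidirectProduct.map (precompHom σ) ψ fun b => by
    ext f x
    simp [precompHom, wreathAction, wreathShift, hσ]

theorem mapOfEquivariant_injective {ψ : B' →* B} {σ : B → B'}
    {hσ : ∀ x b, σ (x * ψ b) = σ x * b} (hψ : Function.Injective ψ)
    (hσs : Function.Surjective σ) : Function.Injective (mapOfEquivariant (A := A) ψ σ hσ) := by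
  intro p q hpq
  ext1
  · exact precompHom_injective hσs (congrArg SemidirectProduct.left hpq)
  · exact hψ (congrArg SemidirectProduct.right hpq)

theorem exists_injective_of_subgroup (H : Subgroup B) :
    ∃ f : Wr A H →* Wr A B, Function.Injective f := by
  obtain ⟨S, hS, -⟩ := Subgroup.exists_isComplement_left H 1
  have : Nonempty S := hS.nonempty_left.to_subtype
  refine ⟨mapOfEquivariant H.subtype (fun x => (hS.equiv x).2) fun x b => ?_,
    mapOfEquivariant_injective H.subtype_injective
      (Prod.snd_surjective.comp hS.equiv.surjective)⟩
  simp [hS.equiv_mul_right]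

end Wr

/-- Lemma: if `X ∈ 𝔛`, `Y ∈ 𝔜` and `Y*` is a subgroup of `Y`, then
`X Wr Y*` satisfies every law of the class `𝔛 Wr 𝔜`. -/
theorem wreath_subgroup_satisfies_laws
    (𝔛 : ∀ (G : Type u) [Group G], Prop) (𝔜 : ∀ (H : Type u') [Group H], Prop)
    (X : Type u) [Group X] (Y : Type u') [Group Y] (hX : 𝔛 X) (hY : 𝔜 Y)
    (Ystar : Subgroup Y)
    (w : FreeGroup ℕ)
    (hw : ∀ (X' : Type u) [Group X'] (Y' : Type u') [Group Y'],
        𝔛 X' → 𝔜 Y' → IsLaw (Wr X' Y') w) :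
    IsLaw (Wr X Ystar) w := by
  obtain ⟨f, hf⟩ := Wr.exists_injective_of_subgroup (A := X) Ystar
  exact IsLaw.of_injective f hf (hw X Y hX hY)
end

section
/- Let 𝔛 be a class of abelian groups and 𝔜 any class of groups, let X ∈ 𝔛 and Y ∈ 𝔜, and let Y* be a homomorphic image (quotient) of Y. Then the wreath product X Wr Y* satisfies every law of the class 𝔛 Wr 𝔜 = {X' Wr Y' : X' ∈ 𝔛, Y' ∈ 𝔜}; that is, X Wr Y* ∈ var(𝔛 Wr 𝔜). -/
universe u u' u''


variable (X : Type u) {Y : Type u'} {Ystar : Type u''}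
  [Group X] [Group Y] [Group Ystar]

def pbAct (ρ : Y →* Ystar) : Y →* MulAut (Ystar → X) :=
  (wreathAction X Ystar).comp ρ

def toQuot (ρ : Y →* Ystar) : ((Ystar → X) ⋊[pbAct X ρ] Y) →* Wr X Ystar where
  toFun p := ⟨p.left, ρ p.right⟩
  map_one' := by ext <;> simp
  map_mul' p q := by
    ext
    · rfl
    · exact map_mul ρ _ _

def toBig (ρ : Y →* Ystar) : ((Ystar → X) ⋊[pbAct X ρ] Y) →* Wr X Y where
  toFun p := ⟨fun b => p.left (ρ b), p.right⟩
  map_one' := by ext <;> simp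
  map_mul' p q := by
    ext b
    · show _ = p.left (ρ b) * q.left (ρ (b * p.right))
      rw [map_mul]; rfl
    · rfl

theorem toBig_inj (ρ : Y →* Ystar) (hρ : Function.Surjective ρ) :
    Function.Injective (toBig X ρ) := by
  intro p q h
  have h1 := congrArg SemidirectProduct.left h
  have h2 := congrArg SemidirectProduct.right h
  simp [toBig] at h1 h2
  ext z
  · obtain ⟨y, rfl⟩ := hρ z
    exact congrFun h1 y
  · exact h2


/-- Lemma: if `𝔛` is a class of abelian groups, `X ∈ 𝔛`, `Y ∈ 𝔜` and `Y*` is a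
homomorphic image of `Y`, then `X Wr Y*` satisfies every law of the class `𝔛 Wr 𝔜`. -/
theorem abelian_wreath_quotient_satisfies_laws
    (𝔛 : ∀ (G : Type u) [Group G], Prop) (𝔜 : ∀ (H : Type u') [Group H], Prop)
    (hab : ∀ (G : Type u) [Group G], 𝔛 G → ∀ a b : G, a * b = b * a)
    (X : Type u) [Group X] (Y : Type u') [Group Y] (hX : 𝔛 X) (hY : 𝔜 Y)
    (Ystar : Type u'') [Group Ystar] (ρ : Y →* Ystar) (hρ : Function.Surjective ρ)
    (w : FreeGroup ℕ)
    (hw : ∀ (X' : Type u) [Group X'] (Y' : Type u') [Group Y'],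
        𝔛 X' → 𝔜 Y' → IsLaw (Wr X' Y') w) :
    IsLaw (Wr X Ystar) w := by
  intro φ
  choose g hg using fun n => hρ (φ (FreeGroup.of n)).right
  set c : ℕ → (Ystar → X) ⋊[pbAct X ρ] Y :=
    fun n => ⟨(φ (FreeGroup.of n)).left, g n⟩ with hc
  set ψ := FreeGroup.lift c with hψ
  have hcomm : (toQuot X ρ).comp ψ = φ := by
    apply FreeGroup.ext_hom
    intro n
    simp only [MonoidHom.comp_apply, hψ, FreeGroup.lift_apply_of, hc]
    exact SemidirectProduct.ext rfl (hg n)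
  have h1 : toBig X ρ (ψ w) = 1 := hw X Y hX hY ((toBig X ρ).comp ψ)
  have h2 : ψ w = 1 := toBig_inj X ρ hρ (by simpa using h1)
  calc φ w = toQuot X ρ (ψ w) := by rw [← hcomm]; rfl
    _ = 1 := by rw [h2, map_one]
end

section
/- Let p be a prime and let A be a nilpotent p-group of finite exponent with nilpotency class c. Then there exists a finitely generated subgroup Ã of A such that for every h = 1, …, c the exponent of γ_h(Ã) equals the exponent of γ_h(A); in particular, Ã also has nilpotency class c. -/
/-!
For every `n < c` the exponent of `γ_{n+1}(A)` is the least common multiple of finitely many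
element orders, one element of order `q ^ v_q(exp)` for each prime `q` of the exponent.
Each of these finitely many elements is a product of iterated commutators of finitely many
elements of `A`, so it already lies in the corresponding term of the lower central series of a
finitely generated subgroup. Taking all these generators at once gives `Ã`, whose lower central
series terms have the same exponents as those of `A` up to `γ_c`; as `γ_c(A) ≠ 1`, also
`γ_c(Ã) ≠ 1`, so `Ã` has class `c`.
-/

universe u

open Monoid Subgroup

theorem Monoid.exists_finset_lcm_orderOf_eq_exponent {G : Type*} [Monoid G]
    (h : exponent G ≠ 0) : ∃ T : Finset G, T.lcm orderOf = exponent G := by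
  classical
  choose g hg using fun q : (exponent G).primeFactors =>
    (Nat.prime_of_mem_primeFactors q.2).exists_orderOf_eq_pow_factorization_exponent G
  set T := Finset.univ.image g
  have hdvd : T.lcm orderOf ∣ exponent G := Finset.lcm_dvd fun x _ => order_dvd_exponent x
  refine ⟨T, Nat.dvd_antisymm hdvd ?_⟩
  have hT : T.lcm orderOf ≠ 0 := ne_zero_of_dvd_ne_zero h hdvd
  refine (Nat.factorization_prime_le_iff_dvd h hT).mp fun q hq => ?_
  by_cases hqe : q ∈ (exponent G).primeFactors
  · refine (hq.pow_dvd_iff_le_factorization hT).mp ?_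
    rw [← hg ⟨q, hqe⟩]
    exact Finset.dvd_lcm (Finset.mem_image_of_mem g (Finset.mem_univ _))
  · rw [← Nat.support_factorization, Finsupp.notMem_support_iff] at hqe
    simp [hqe]

namespace Subgroup

variable {G : Type*} [Group G]

theorem exponent_dvd_of_le {H K : Subgroup G} (h : H ≤ K) : exponent H ∣ exponent K :=
  exponent_dvd_of_monoidHom (inclusion h) (inclusion_injective h)

theorem exponent_eq_one_iff (H : Subgroup G) : exponent H = 1 ↔ H = ⊥ := by
  rw [exp_eq_one_iff, ← not_nontrivial_iff_subsingleton, nontrivial_iff_ne_bot, not_not]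

theorem exponent_top_lowerCentralSeries (H : Subgroup G) (n : ℕ) :
    exponent ((⊤ : Subgroup H).lowerCentralSeries n) = exponent (H.lowerCentralSeries n) := by
  rw [← top_subtype_lowerCentralSeries H n]
  exact exponent_eq_of_mulEquiv (equivMapOfInjective _ _ H.subtype_injective)

theorem exists_finset_subset_exponent_dvd (K : Subgroup G) (hK : exponent K ≠ 0) :
    ∃ T : Finset G, (T : Set G) ⊆ K ∧
      ∀ H : Subgroup G, (T : Set G) ⊆ H → exponent K ∣ exponent H := by
  obtain ⟨T, hT⟩ := exists_finset_lcm_orderOf_eq_exponent hK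
  refine ⟨T.map (Function.Embedding.subtype _), fun x hx => ?_, fun H hTH => ?_⟩
  · obtain ⟨y, -, rfl⟩ := Finset.mem_map.mp hx
    exact y.2
  rw [← hT]
  refine Finset.lcm_dvd fun x hx => ?_
  have hxH : (x : G) ∈ H := hTH (Finset.mem_map_of_mem _ hx)
  rw [← orderOf_coe, ← orderOf_mk (H := H) _ hxH]
  exact order_dvd_exponent _

theorem exists_finset_mem_lowerCentralSeries_closure {n : ℕ} {x : G}
    (hx : x ∈ (⊤ : Subgroup G).lowerCentralSeries n) :
    ∃ S : Finset G, x ∈ (closure (S : Set G)).lowerCentralSeries n := by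
  classical
  induction n generalizing x with
  | zero => exact ⟨{x}, subset_closure (by simp)⟩
  | succ n ih =>
    induction hx using closure_induction with
    | mem y hy =>
      obtain ⟨a, ha, b, -, rfl⟩ := hy
      obtain ⟨S, hS⟩ := ih ha
      have hle : closure (S : Set G) ≤ closure (insert b S : Finset G) :=
        closure_mono (by simp)
      exact ⟨insert b S, commutator_mem_commutator (lowerCentralSeries_mono n hle hS)
        (subset_closure (by simp))⟩
    | one => exact ⟨∅, one_mem _⟩
    | mul y z _ _ hy hz =>
      obtain ⟨S, hS⟩ := hy
      obtain ⟨S', hS'⟩ := hz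
      refine ⟨S ∪ S', mul_mem ?_ ?_⟩
      · exact lowerCentralSeries_mono _ (closure_mono (by simp)) hS
      · exact lowerCentralSeries_mono _ (closure_mono (by simp)) hS'
    | inv y _ hy =>
      obtain ⟨S, hS⟩ := hy
      exact ⟨S, inv_mem hS⟩

theorem exists_finset_exponent_lowerCentralSeries_dvd (n : ℕ)
    (h : exponent ((⊤ : Subgroup G).lowerCentralSeries n) ≠ 0) :
    ∃ S : Finset G, ∀ H : Subgroup G, (S : Set G) ⊆ H →
      exponent ((⊤ : Subgroup G).lowerCentralSeries n) ∣ exponent (H.lowerCentralSeries n) := by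
  classical
  obtain ⟨T, hTK, hT⟩ := exists_finset_subset_exponent_dvd _ h
  choose S hS using fun t : T => exists_finset_mem_lowerCentralSeries_closure (hTK t.2)
  refine ⟨Finset.univ.biUnion S, fun H hSH => hT _ fun t ht => ?_⟩
  refine lowerCentralSeries_mono n ((closure_le _).mpr fun s hs => hSH ?_) (hS ⟨t, ht⟩)
  exact Finset.mem_biUnion.mpr ⟨⟨t, ht⟩, Finset.mem_univ _, hs⟩

theorem nilpotencyClass_eq_of_lowerCentralSeries_ne_bot [Group.IsNilpotent G] (H : Subgroup G)
    (h : ∀ n < Group.nilpotencyClass G, H.lowerCentralSeries n ≠ ⊥) :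
    Group.nilpotencyClass H = Group.nilpotencyClass G :=
  (nilpotencyClass_le H).antisymm <| not_lt.mp fun hlt =>
    h _ hlt (lowerCentralSeries_eq_bot_of_nilpotencyClass_le le_rfl)

end Subgroup

theorem exists_fg_subgroup_same_lcs_exponents_general
    (A : Type u) [Group A] [Group.IsNilpotent A]
    (hAexp : Monoid.exponent A ≠ 0)
    (c : ℕ) (hc : Group.nilpotencyClass A = c) :
    ∃ Atilde : Subgroup A, Atilde.FG ∧
      (∀ h : ℕ, 1 ≤ h → h ≤ c →
        Monoid.exponent ↥(Subgroup.lowerCentralSeries (⊤ : Subgroup ↥Atilde) (h - 1)) =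
          Monoid.exponent ↥(Subgroup.lowerCentralSeries (⊤ : Subgroup A) (h - 1))) ∧
      ∃ hn : Group.IsNilpotent ↥Atilde, Group.nilpotencyClass ↥Atilde = c := by
  classical
  have hexp (n : ℕ) : exponent ((⊤ : Subgroup A).lowerCentralSeries n) ≠ 0 :=
    ne_zero_of_dvd_ne_zero hAexp (exponent_dvd_of_monoidHom _ (subtype_injective _))
  choose S hS using fun n => exists_finset_exponent_lowerCentralSeries_dvd n (hexp n)
  set Atilde := closure (((Finset.range c).biUnion S : Finset A) : Set A)
  have hAtilde (n : ℕ) (hn : n < c) : exponent (Atilde.lowerCentralSeries n) =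
      exponent ((⊤ : Subgroup A).lowerCentralSeries n) := by
    refine Nat.dvd_antisymm (exponent_dvd_of_le (lowerCentralSeries_mono n le_top))
      (hS n _ (subset_closure.trans' ?_))
    exact Finset.coe_subset.mpr (Finset.subset_biUnion_of_mem S (Finset.mem_range.mpr hn))
  refine ⟨Atilde, ⟨_, rfl⟩, fun h h1 h2 => ?_, inferInstance, ?_⟩
  · rw [exponent_top_lowerCentralSeries, hAtilde _ (by omega)]
  · subst hc
    refine nilpotencyClass_eq_of_lowerCentralSeries_ne_bot _ fun n hn hbot => ?_
    rw [← exponent_eq_one_iff, hAtilde n hn, exponent_eq_one_iff,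
      Subgroup.lowerCentralSeries_eq_bot_iff_nilpotencyClass_le] at hbot
    omega

/-- For a nilpotent `p`-group `A` of finite exponent and nilpotency class `c`, there is
a finitely generated subgroup `Ã ≤ A` such that for each `h = 1, …, c` the exponent of
`γ_h(Ã)` equals the exponent of `γ_h(A)`; in particular `Ã` also has nilpotency class `c`.
(Here `γ_h(G) = lowerCentralSeries G (h - 1)`, so `γ_1(G) = G`.) -/
theorem exists_fg_subgroup_same_lcs_exponents
    {p : ℕ} (hp : p.Prime)
    (A : Type u) [Group A] [Group.IsNilpotent A]
    (hA : IsPGroup p A) (hAexp : Monoid.exponent A ≠ 0)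
    (c : ℕ) (hc : Group.nilpotencyClass A = c) :
    ∃ Atilde : Subgroup A, Atilde.FG ∧
      (∀ h : ℕ, 1 ≤ h → h ≤ c →
        Monoid.exponent ↥(Subgroup.lowerCentralSeries (⊤ : Subgroup ↥Atilde) (h - 1)) =
          Monoid.exponent ↥(Subgroup.lowerCentralSeries (⊤ : Subgroup A) (h - 1))) ∧
      ∃ hn : Group.IsNilpotent ↥Atilde, Group.nilpotencyClass ↥Atilde = c :=
  exists_fg_subgroup_same_lcs_exponents_general A hAexp c hc
end

section
/- Let p be a prime, v ≥ 2, and 1 ≤ l ≤ t, and set Z = (ℤ/p^vℤ)^l × (ℤ/p^{v−1}ℤ)^{t−l}. Then for the K_p-series of Z: K_{i,p}(Z) ≠ 1 if and only if i ≤ p^{v−1}; and the index of K_{s+1,p}(Z) in K_{s,p}(Z) equals p^t if s = p^k for some 0 ≤ k ≤ v−2, equals p^l if s = p^{v−1}, and equals 1 for every other s ≥ 1. -/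
/-- `subgroupPow H n` is the subgroup `H^n` generated by all `n`-th powers of
elements of the subgroup `H`. -/
def subgroupPow {G : Type*} [Group G] (H : Subgroup G) (n : ℕ) : Subgroup G :=
  Subgroup.closure ((· ^ n) '' (H : Set G))

/-- The `K_p`-series: `K_{i,p}(G) = ∏_{r ≥ 1, j ≥ 0, r·p^j ≥ i} γ_r(G)^{p^j}`,
where `γ_r(G)` is the `r`-th term of the lower central series (so
`γ_r(G) = lowerCentralSeries G (r - 1)` with `γ_1(G) = G`). -/
def Kseries (p : ℕ) (G : Type*) [Group G] (i : ℕ) : Subgroup G :=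
  ⨆ (r : ℕ) (_ : 1 ≤ r) (j : ℕ) (_ : i ≤ r * p ^ j),
    subgroupPow (Subgroup.lowerCentralSeries (⊤ : Subgroup G) (r - 1)) (p ^ j)

/-- The group `Z = C_{p^v}^l × C_{p^{v-1}}^{t-l}` (written multiplicatively). -/
abbrev Zgrp (p v l t : ℕ) : Type :=
  Multiplicative ((Fin l → ZMod (p ^ v)) × (Fin (t - l) → ZMod (p ^ (v - 1))))

section CommK
variable {G : Type*} [CommGroup G]

lemma subgroupPow_bot (n : ℕ) : subgroupPow (⊥ : Subgroup G) n = ⊥ := by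
  rw [subgroupPow]
  refine le_bot_iff.mp ((Subgroup.closure_le ⊥).mpr ?_)
  rintro x ⟨y, hy, rfl⟩
  simp only [Subgroup.coe_bot, Set.mem_singleton_iff] at hy
  subst hy
  simp

lemma subgroupPow_top (n : ℕ) :
    subgroupPow (⊤ : Subgroup G) n = (powMonoidHom n : G →* G).range := by
  rw [subgroupPow, Subgroup.coe_top, Set.image_univ]
  have h : Set.range (fun x : G => x ^ n) = ((powMonoidHom n : G →* G).range : Set G) := rfl
  rw [h, Subgroup.closure_eq]

lemma range_pow_dvd_le {m n : ℕ} (h : m ∣ n) :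
    ((powMonoidHom n : G →* G)).range ≤ (powMonoidHom m : G →* G).range := by
  obtain ⟨c, rfl⟩ := h
  rintro x ⟨y, rfl⟩
  exact ⟨y ^ c, by show (y ^ c) ^ m = y ^ (m * c); rw [← pow_mul, mul_comm]⟩

lemma lcs_comm_eq_bot {m : ℕ} (hm : 1 ≤ m) : Subgroup.lowerCentralSeries (⊤ : Subgroup G) m = ⊥ := by
  have h1 : Subgroup.lowerCentralSeries (⊤ : Subgroup G) 1 = ⊥ := by
    rw [lowerCentralSeries_one, commutator_def]
    refine le_bot_iff.mp (Subgroup.commutator_le.mpr fun g _ h _ => ?_)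
    simp [commutatorElement_eq_one_iff_mul_comm.mpr (mul_comm g h)]
  exact le_bot_iff.mp (h1 ▸ lowerCentralSeries_antitone _ hm)

/-- The least `j` with `i ≤ p ^ j`. -/
noncomputable def pJ (p i : ℕ) : ℕ := sInf {j : ℕ | i ≤ p ^ j}

lemma le_pow_pJ {p : ℕ} (hp : 2 ≤ p) (i : ℕ) : i ≤ p ^ pJ p i :=
  Nat.sInf_mem (s := {j : ℕ | i ≤ p ^ j}) ⟨i, le_of_lt (Nat.lt_pow_self (n := i) (a := p) (by omega))⟩

lemma pJ_le_iff {p : ℕ} (hp : 2 ≤ p) {i m : ℕ} : pJ p i ≤ m ↔ i ≤ p ^ m := by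
  constructor
  · intro h
    exact le_trans (le_pow_pJ hp i) (Nat.pow_le_pow_right (by omega) h)
  · intro h
    exact Nat.sInf_le h

lemma Kseries_comm (p : ℕ) (hp : 2 ≤ p) (i : ℕ) :
    Kseries p G i = (powMonoidHom (p ^ pJ p i) : G →* G).range := by
  rw [Kseries]
  apply le_antisymm
  · refine iSup_le fun r => iSup_le fun hr => iSup_le fun j => iSup_le fun hij => ?_
    rcases eq_or_lt_of_le hr with h1 | h2
    · rw [← h1]
      norm_num
      rw [subgroupPow_top]
      refine range_pow_dvd_le (pow_dvd_pow p ((pJ_le_iff hp).mpr ?_))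
      rw [← h1] at hij; simpa using hij
    · rw [lcs_comm_eq_bot (by omega : 1 ≤ r - 1), subgroupPow_bot]
      exact bot_le
  · have h1 : (powMonoidHom (p ^ pJ p i) : G →* G).range
        = subgroupPow (Subgroup.lowerCentralSeries (⊤ : Subgroup G) (1 - 1)) (p ^ pJ p i) := by
      norm_num [lowerCentralSeries_zero, subgroupPow_top]
    rw [h1]
    refine le_iSup_of_le 1 (le_iSup_of_le le_rfl (le_iSup_of_le (pJ p i)
      (le_iSup_of_le ?_ le_rfl)))
    simpa using le_pow_pJ hp i

end CommK

lemma cardRange_zmod (m : ℕ) [NeZero m] (n : ℕ) :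
    Nat.card (Set.range fun x : ZMod m => n • x) = m / m.gcd n := by
  have h : Set.range (fun x : ZMod m => n • x)
      = (AddSubgroup.zmultiples ((n : ℕ) : ZMod m) : Set (ZMod m)) := by
    ext x
    simp only [Set.mem_range, SetLike.mem_coe, AddSubgroup.mem_zmultiples_iff]
    constructor
    · rintro ⟨a, rfl⟩
      refine ⟨(a.val : ℤ), ?_⟩
      rw [natCast_zsmul, nsmul_eq_mul, nsmul_eq_mul]
      simp [ZMod.natCast_val, ZMod.cast_id, mul_comm]
    · rintro ⟨k, rfl⟩
      refine ⟨((k : ℤ) : ZMod m), ?_⟩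
      rw [zsmul_eq_mul, nsmul_eq_mul, mul_comm]
  rw [h]
  have h2 := Nat.card_zmultiples ((n : ℕ) : ZMod m)
  rw [show Nat.card ↥(AddSubgroup.zmultiples ((n:ℕ) : ZMod m) : Set (ZMod m))
    = Nat.card ↥(AddSubgroup.zmultiples ((n:ℕ) : ZMod m)) from rfl, h2,
    ZMod.addOrderOf_coe n (NeZero.ne m)]

lemma card_range_powHom (p v l t : ℕ) (hp : p ≠ 0) (n : ℕ) :
    Nat.card ((powMonoidHom n : Zgrp p v l t →* Zgrp p v l t).range)
      = (p ^ v / (p ^ v).gcd n) ^ l * (p ^ (v-1) / (p ^ (v-1)).gcd n) ^ (t - l) := by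
  haveI : NeZero (p ^ v) := ⟨pow_ne_zero _ hp⟩
  haveI : NeZero (p ^ (v-1)) := ⟨pow_ne_zero _ hp⟩
  set m1 := p ^ v with hm1; set m2 := p ^ (v - 1) with hm2
  have h0 : Nat.card ((powMonoidHom n : Zgrp p v l t →* Zgrp p v l t).range)
      = Nat.card (Set.range (fun a : (Fin l → ZMod m1) × (Fin (t-l) → ZMod m2) => n • a)) := rfl
  rw [h0]
  rw [show (fun a : (Fin l → ZMod m1) × (Fin (t-l) → ZMod m2) => n • a)
      = Prod.map (fun x : Fin l → ZMod m1 => n • x) (fun x : Fin (t-l) → ZMod m2 => n • x)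
      from rfl, Set.range_prodMap]
  rw [Nat.card_congr (Equiv.Set.prod _ _), Nat.card_prod]
  rw [show (fun x : Fin l → ZMod m1 => n • x)
      = Pi.map (fun _ : Fin l => fun y : ZMod m1 => n • y) from rfl,
    show (fun x : Fin (t-l) → ZMod m2 => n • x)
      = Pi.map (fun _ : Fin (t-l) => fun y : ZMod m2 => n • y) from rfl,
    Set.range_piMap, Set.range_piMap,
    Nat.card_congr (Equiv.Set.univPi _), Nat.card_congr (Equiv.Set.univPi _),
    Nat.card_pi, Nat.card_pi]
  simp only [Finset.prod_const, Finset.card_univ, Fintype.card_fin, cardRange_zmod]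
  rfl

lemma relIndex_eq_card_div {G : Type*} [Group G] [Finite G] {H K : Subgroup G} (h : H ≤ K) :
    H.relIndex K = Nat.card K / Nat.card H := by
  have h1 : Nat.card (H.subgroupOf K) * (H.subgroupOf K).index = Nat.card K :=
    Subgroup.card_mul_index _
  have h2 : Nat.card (H.subgroupOf K) = Nat.card H :=
    Nat.card_congr (Subgroup.subgroupOfEquivOfLe h).toEquiv
  have h3 : 0 < Nat.card H := Nat.card_pos
  rw [h2] at h1
  rw [Subgroup.relIndex]
  exact (Nat.div_eq_of_eq_mul_left h3 (by rw [mul_comm]; exact h1.symm)).symm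

lemma gcd_pow_pow (p a b : ℕ) : Nat.gcd (p ^ a) (p ^ b) = p ^ min a b := by
  rcases le_total a b with h | h
  · rw [Nat.gcd_eq_left (pow_dvd_pow p h), min_eq_left h]
  · rw [Nat.gcd_eq_right (pow_dvd_pow p h), min_eq_right h]

/-- The `K_p`-series of `Z = C_{p^v}^l × C_{p^{v-1}}^{t-l}`: `K_{i,p}(Z) ≠ 1` iff
`i ≤ p^{v-1}`, and the index of `K_{s+1,p}(Z)` in `K_{s,p}(Z)` is `p^t` when `s = p^k`
with `0 ≤ k ≤ v-2`, is `p^l` when `s = p^{v-1}`, and is `1` for every other `s ≥ 1`. -/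
theorem Kseries_of_Z
    {p : ℕ} (hp : p.Prime) (v l t : ℕ) (hv : 2 ≤ v) (hl : 1 ≤ l) (hlt : l ≤ t) :
    (∀ i : ℕ, 1 ≤ i → (Kseries p (Zgrp p v l t) i ≠ ⊥ ↔ i ≤ p ^ (v - 1))) ∧
    (∀ s : ℕ, 1 ≤ s →
      ((∃ k : ℕ, k ≤ v - 2 ∧ s = p ^ k) →
        (Kseries p (Zgrp p v l t) (s + 1)).relIndex (Kseries p (Zgrp p v l t) s) = p ^ t) ∧
      (s = p ^ (v - 1) →
        (Kseries p (Zgrp p v l t) (s + 1)).relIndex (Kseries p (Zgrp p v l t) s) = p ^ l) ∧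
      ((¬∃ k : ℕ, k ≤ v - 2 ∧ s = p ^ k) → s ≠ p ^ (v - 1) →
        (Kseries p (Zgrp p v l t) (s + 1)).relIndex (Kseries p (Zgrp p v l t) s) = 1)) := by
  have hp2 : 2 ≤ p := hp.two_le
  haveI : NeZero (p ^ v) := ⟨pow_ne_zero _ hp.ne_zero⟩
  haveI : NeZero (p ^ (v - 1)) := ⟨pow_ne_zero _ hp.ne_zero⟩
  set G := Zgrp p v l t with hG
  -- the exponent function
  set e : ℕ → ℕ := fun j => (v - min v j) * l + ((v - 1) - min (v - 1) j) * (t - l) with he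
  have hR : ∀ j : ℕ, Nat.card ((powMonoidHom (p ^ j) : G →* G).range) = p ^ e j := by
    intro j
    rw [card_range_powHom p v l t hp.ne_zero, gcd_pow_pow, gcd_pow_pow,
      Nat.pow_div (min_le_left _ _) hp.pos, Nat.pow_div (min_le_left _ _) hp.pos,
      ← pow_mul, ← pow_mul, ← pow_add]
  have hK : ∀ i, Kseries p G i = (powMonoidHom (p ^ pJ p i) : G →* G).range :=
    Kseries_comm p hp2
  have hcardK : ∀ i, Nat.card (Kseries p G i) = p ^ e (pJ p i) := by
    intro i; rw [hK i, hR]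
  have he0 : ∀ j, e j = 0 ↔ v ≤ j := by
    intro j
    simp only [he]
    constructor
    · intro h
      have h1 : (v - min v j) * l = 0 := by omega
      rcases Nat.mul_eq_zero.mp h1 with h2 | h2
      · rcases le_total v j with h3 | h3
        · exact h3
        · rw [min_eq_right h3] at h2; omega
      · omega
    · intro h
      have h1 : min v j = v := min_eq_left h
      have h2 : min (v - 1) j = v - 1 := min_eq_left (by omega)
      rw [h1, h2]
      simp
  -- monotonicity of the series
  have hmono : ∀ i, Kseries p G (i + 1) ≤ Kseries p G i := by
    intro i
    rw [hK, hK]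
    exact range_pow_dvd_le (pow_dvd_pow p ((pJ_le_iff hp2).mpr
      (le_trans (Nat.le_succ i) (le_pow_pJ hp2 (i + 1)))))
  have hrel : ∀ s : ℕ, (Kseries p G (s + 1)).relIndex (Kseries p G s)
      = p ^ e (pJ p s) / p ^ e (pJ p (s + 1)) := by
    intro s
    rw [relIndex_eq_card_div (hmono s), hcardK, hcardK]
  have hJpow : ∀ k : ℕ, pJ p (p ^ k) = k := by
    intro k
    refine le_antisymm ((pJ_le_iff hp2).mpr le_rfl) ?_
    have h1 := le_pow_pJ hp2 (p ^ k)
    exact (Nat.pow_le_pow_iff_right (by omega : 1 < p)).mp h1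
  have hJpow1 : ∀ k : ℕ, pJ p (p ^ k + 1) = k + 1 := by
    intro k
    have hpk : 1 ≤ p ^ k := Nat.one_le_pow _ _ hp.pos
    refine le_antisymm ((pJ_le_iff hp2).mpr ?_) ?_
    · have h1 : 2 * p ^ k ≤ p * p ^ k := Nat.mul_le_mul_right _ (by omega)
      rw [pow_succ, mul_comm (p ^ k) p]
      omega
    · have h1 := le_pow_pJ hp2 (p ^ k + 1)
      have h2 : p ^ k < p ^ pJ p (p ^ k + 1) := by omega
      exact (Nat.pow_lt_pow_iff_right (by omega : 1 < p)).mp h2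
  have hJmono : ∀ s : ℕ, pJ p s ≤ pJ p (s + 1) :=
    fun s => (pJ_le_iff hp2).mpr (le_trans (Nat.le_succ s) (le_pow_pJ hp2 (s + 1)))
  constructor
  · -- part 1
    intro i hi
    have h1 : Kseries p G i = ⊥ ↔ Nat.card (Kseries p G i) = 1 := by
      rw [Subgroup.card_eq_one]
    have hpe : ∀ E : ℕ, p ^ E = 1 ↔ E = 0 := by
      intro E
      constructor
      · intro h
        by_contra hE
        have := (pow_eq_one_iff_left hE).mp h
        omega
      · intro h; simp [h]
    rw [ne_eq, h1, hcardK, hpe]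
    constructor
    · intro h4
      have h5 : ¬ v ≤ pJ p i := fun hc => h4 ((he0 _).mpr hc)
      have h6 : pJ p i ≤ v - 1 := by omega
      exact le_trans (le_pow_pJ hp2 i) (Nat.pow_le_pow_right hp.pos h6)
    · intro h h4
      have h5 : v ≤ pJ p i := (he0 _).mp h4
      have h6 : pJ p i ≤ v - 1 := (pJ_le_iff hp2).mpr h
      omega
  · -- part 2
    intro s hs
    refine ⟨?_, ?_, ?_⟩
    · rintro ⟨k, hk, rfl⟩
      rw [hrel, hJpow, hJpow1]
      have h1 : min v k = k := min_eq_right (by omega)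
      have h2 : min v (k + 1) = k + 1 := min_eq_right (by omega)
      have h3 : min (v - 1) k = k := min_eq_right (by omega)
      have h4 : min (v - 1) (k + 1) = k + 1 := min_eq_right (by omega)
      have h5 : e k = e (k + 1) + t := by
        rw [he]; simp only [h1, h2, h3, h4]
        have hA : v - k = (v - (k + 1)) + 1 := by omega
        have hB : v - 1 - k = ((v - 1) - (k + 1)) + 1 := by omega
        rw [hA, hB, Nat.add_mul, Nat.add_mul, one_mul, one_mul]
        omega
      rw [h5, pow_add, Nat.mul_div_cancel_left _ (pow_pos hp.pos _)]
    · rintro rfl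
      rw [hrel, hJpow, hJpow1]
      have h1 : min v (v - 1) = v - 1 := min_eq_right (by omega)
      have h2 : min v (v - 1 + 1) = v - 1 + 1 := min_eq_right (by omega)
      have h3 : min (v - 1) (v - 1) = v - 1 := min_eq_left le_rfl
      have h4 : min (v - 1) (v - 1 + 1) = v - 1 := min_eq_left (by omega)
      have h5 : e (v - 1) = l := by
        rw [he]; simp only [h1, h3]
        have : v - (v - 1) = 1 := by omega
        simp [this]
      have h6 : e (v - 1 + 1) = 0 := (he0 _).mpr (by omega)
      rw [h5, h6, pow_zero, Nat.div_one]
    · intro hns hne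
      by_cases hpow : ∃ k : ℕ, s = p ^ k
      · obtain ⟨k, rfl⟩ := hpow
        have hk1 : ¬ k ≤ v - 2 := fun hc => hns ⟨k, hc, rfl⟩
        have hk2 : k ≠ v - 1 := fun hc => hne (by rw [hc])
        have hk : v ≤ k := by omega
        rw [hrel, hJpow, hJpow1]
        have h5 : e k = 0 := (he0 _).mpr hk
        have h6 : e (k + 1) = 0 := (he0 _).mpr (by omega)
        rw [h5, h6, Nat.div_self (pow_pos hp.pos _)]
      · have hJeq : pJ p (s + 1) = pJ p s := by
          refine le_antisymm ?_ (hJmono s)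
          refine (pJ_le_iff hp2).mpr ?_
          have h1 := le_pow_pJ hp2 s
          have h2 : s ≠ p ^ pJ p s := fun hc => hpow ⟨pJ p s, hc⟩
          omega
        rw [hrel, hJeq, Nat.div_self (pow_pos hp.pos _)]
end

section
/- Let A be a group generated by z elements and let B be a finite group generated by n elements. Then the Cartesian wreath product A Wr B is generated by z + n elements. -/
universe u u'

/-! The copy of `A` in the base group sitting at the coordinate `1`, together with `B`, already
generates `A Wr B`: conjugating by `b ∈ B` moves that copy to the coordinate `b⁻¹`, and since `B`
is finite the base group is the direct product of these copies. So generators of `A` placed at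
coordinate `1`, followed by generators of `B`, give `z + n` generators. -/

open SemidirectProduct

theorem MonoidHom.range_le_of_closure_eq_top {G H : Type*} [Group G] [Group H] (φ : G →* H)
    {s : Set G} (hs : Subgroup.closure s = ⊤) {K : Subgroup H} (h : ∀ x ∈ s, φ x ∈ K) :
    φ.range ≤ K := by
  rw [φ.range_eq_map, ← hs, MonoidHom.map_closure, Subgroup.closure_le]
  rintro _ ⟨x, hx, rfl⟩
  exact h x hx

theorem SemidirectProduct.eq_top_of_range_inl_le_of_range_inr_le {N G : Type*} [Group N]
    [Group G] {φ : G →* MulAut N} {S : Subgroup (N ⋊[φ] G)}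
    (hN : (inl : N →* N ⋊[φ] G).range ≤ S) (hG : (inr : G →* N ⋊[φ] G).range ≤ S) : S = ⊤ :=
  eq_top_iff.2 fun x _ =>
    inl_left_mul_inr_right x ▸ S.mul_mem (hN ⟨x.left, rfl⟩) (hG ⟨x.right, rfl⟩)

theorem wreathAction_mulSingle {A B : Type*} [Group A] [Group B] [DecidableEq B] (b c : B)
    (a : A) : wreathAction A B b (Pi.mulSingle c a) = Pi.mulSingle (c * b⁻¹) a := by
  funext x
  simp only [wreathAction, wreathShift, MonoidHom.coe_mk, OneHom.coe_mk, MulEquiv.coe_mk,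
    Equiv.coe_fn_mk, Pi.mulSingle_apply, eq_mul_inv_iff_mul_eq]

theorem Wr.eq_top_of_range_inr_le_of_range_inl_mulSingle_one_le {A B : Type*} [Group A]
    [Group B] [Finite B] [DecidableEq B] {S : Subgroup (Wr A B)}
    (hB : (inr : B →* Wr A B).range ≤ S)
    (hA : ((inl : (B → A) →* Wr A B).comp (MonoidHom.mulSingle (fun _ : B => A) 1)).range ≤ S) :
    S = ⊤ := by
  refine eq_top_of_range_inl_le_of_range_inr_le ?_ hB
  rw [MonoidHom.range_eq_map, ← Subgroup.pi_top Set.univ, Subgroup.map_le_iff_le_comap,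
    Subgroup.pi_le_iff]
  rintro b _ ⟨a, -, rfl⟩
  have hconj : (inl (Pi.mulSingle b a) : Wr A B) = inr b⁻¹ * inl (Pi.mulSingle 1 a) * inr b := by
    simpa only [wreathAction_mulSingle, one_mul, inv_inv] using
      inl_aut (φ := wreathAction A B) b⁻¹ (Pi.mulSingle 1 a)
  change inl (Pi.mulSingle b a) ∈ S
  rw [hconj]
  exact S.mul_mem (S.mul_mem (hB ⟨_, rfl⟩) (hA ⟨a, rfl⟩)) (hB ⟨_, rfl⟩)

/-- If `A` is generated by `z` elements and `B` is a finite group generated by `n`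
elements, then the Cartesian wreath product `A Wr B` is generated by `z + n` elements. -/
theorem wreath_generated_by_add
    (A : Type u) [Group A] (B : Type u') [Group B] [Finite B]
    (z n : ℕ)
    (hA : ∃ f : Fin z → A, Subgroup.closure (Set.range f) = ⊤)
    (hB : ∃ g : Fin n → B, Subgroup.closure (Set.range g) = ⊤) :
    ∃ h : Fin (z + n) → Wr A B, Subgroup.closure (Set.range h) = ⊤ := by
  classical
  obtain ⟨f, hf⟩ := hA
  obtain ⟨g, hg⟩ := hB
  let h : Fin (z + n) → Wr A B :=
    Fin.append (fun i => inl (Pi.mulSingle 1 (f i))) (fun j => inr (g j))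
  refine ⟨h, Wr.eq_top_of_range_inr_le_of_range_inl_mulSingle_one_le ?_ ?_⟩
  · refine MonoidHom.range_le_of_closure_eq_top _ hg ?_
    rintro _ ⟨j, rfl⟩
    exact Subgroup.subset_closure ⟨Fin.natAdd z j, Fin.append_right _ _ j⟩
  · refine MonoidHom.range_le_of_closure_eq_top _ hf ?_
    rintro _ ⟨i, rfl⟩
    exact Subgroup.subset_closure ⟨Fin.castAdd n i, Fin.append_left _ _ i⟩
end
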